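/- arXiv:2009.04529 — 2 statements merged into one kernel-verified Lean document; each statement's English description precedes it below -/
import Mathlib

section
/- Let s ≥ 2 be an integer, let a be a real number with a > 0, let k = ⌈a⌉ − 1, and let n be an integer with n > ⌈a⌉. If G is a graph on n vertices with gn(G,s) < a and exactly C(n,2) − C(n−k,2) edges, then G is isomorphic to K_k ⊕ E_{n−k}. In other words, the family of extremal graphs Ex(n, gn_s ≥ a) consists of the single graph K_k ⊕ E_{n−k}. -/
/-!
If `Gᶜ` were `(n - k - 1)`-colourable, `G` would be covered by `n - k - 1` cliques, and letting
each clique guess that its colours sum to zero gives `gn(G, s) ≥ k + 1 ≥ a`. So `Gᶜ` has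
chromatic number at least `n - k` and exactly `C(n - k, 2)` edges.

A graph that is not `t`-colourable has at least `C(t + 1, 2)` edges, since a colouring with the
fewest colours has an edge between any two colour classes. With exactly `C(t + 1, 2)` edges, a
vertex of degree strictly between `0` and `t` is impossible: deleting its edges leaves a
`t`-colourable graph, and the vertex then sees fewer than `t` colours. A degree count now shows
that the non-isolated vertices form a `K_{t+1}`, so `Gᶜ` is `K_{n-k}` plus isolated vertices.
-/

open SimpleGraph

/-- A strategy for the guessing game on `G` with `s` colors: a family of guessing
functions, one per vertex, where each vertex's guess depends only on the colors
of the vertices in its (open) neighborhood. -/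
def IsGuessingStrategy {V : Type*} (G : SimpleGraph V) (s : ℕ)
    (f : V → (V → Fin s) → Fin s) : Prop :=
  ∀ (v : V) (c₁ c₂ : V → Fin s), (∀ u, G.Adj v u → c₁ u = c₂ u) → f v c₁ = f v c₂

/-- The maximum, over all strategies for the guessing game on `G` with `s` colors,
of the number of fixed points of the strategy (colorings where every vertex
guesses its own color correctly). -/
noncomputable def maxFixedPoints {V : Type*} (G : SimpleGraph V) (s : ℕ) : ℕ :=
  sSup {n : ℕ | ∃ f : V → (V → Fin s) → Fin s, IsGuessingStrategy G s f ∧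
    n = Nat.card {c : V → Fin s // ∀ v, f v c = c v}}

/-- The guessing number of `G` with `s` colors: the logarithm base `s` of the
maximum number of fixed points of a strategy. -/
noncomputable def guessingNumber {V : Type*} (G : SimpleGraph V) (s : ℕ) : ℝ :=
  Real.logb s (maxFixedPoints G s)

/-- The join `K_k ⊕ E_{n-k}`: the first `k` vertices form a clique and are joined
to all other vertices; the remaining `n - k` vertices form an independent set. -/
def cliqueJoinEmpty (n k : ℕ) : SimpleGraph (Fin n) :=
  SimpleGraph.fromRel (fun u _ => (u : ℕ) < k)

/-- The extremal number `ex(n, gn_s ≥ a)`: the maximum number of edges over all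
graphs on `n` vertices whose guessing number with `s` colors is `< a`. -/
noncomputable def exGN (n s : ℕ) (a : ℝ) : ℕ :=
  sSup {m : ℕ | ∃ G : SimpleGraph (Fin n),
    guessingNumber G s < a ∧ m = Nat.card G.edgeSet}

/-- `G` is `(gn_s ≥ a)`-saturated: `gn(G,s) < a` but adding any missing edge
raises the guessing number to at least `a`. -/
def GNSaturated {V : Type*} (G : SimpleGraph V) (s : ℕ) (a : ℝ) : Prop :=
  guessingNumber G s < a ∧
    ∀ u w : V, u ≠ w → ¬G.Adj u w →
      a ≤ guessingNumber (G ⊔ SimpleGraph.fromEdgeSet {s(u, w)}) s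

/-- The saturation number `sat(n, gn_s ≥ a)`: the minimum number of edges over
all `(gn_s ≥ a)`-saturated graphs on `n` vertices. -/
noncomputable def satGN (n s : ℕ) (a : ℝ) : ℕ :=
  sInf {m : ℕ | ∃ G : SimpleGraph (Fin n),
    GNSaturated G s a ∧ m = Nat.card G.edgeSet}

/-- The disjoint union `H + E_{n-h}` of a graph `H` on `h` vertices with `n - h`
isolated vertices, realized on `Fin n`. -/
def withIsolated {h : ℕ} (H : SimpleGraph (Fin h)) (n : ℕ) : SimpleGraph (Fin n) :=
  SimpleGraph.fromRel (fun u v =>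
    ∃ (hu : (u : ℕ) < h) (hv : (v : ℕ) < h), H.Adj ⟨u, hu⟩ ⟨v, hv⟩)

/-- `K*_{a,a}`: the complete bipartite graph `K_{a,a}` with one subdivided edge.
Vertices `0, …, a-1` are `x_1, …, x_a`; vertices `a, …, 2a-1` are `y_1, …, y_a`;
vertex `2a` is the subdivision vertex `v_0`, adjacent exactly to `x_1` and `y_1`.
The edge `x_1 y_1` is removed. -/
def Kstar (a : ℕ) : SimpleGraph (Fin (2 * a + 1)) :=
  SimpleGraph.fromRel (fun u v =>
    ((u : ℕ) < a ∧ a ≤ (v : ℕ) ∧ (v : ℕ) < 2 * a ∧ ¬((u : ℕ) = 0 ∧ (v : ℕ) = a)) ∨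
    ((u : ℕ) = 2 * a ∧ ((v : ℕ) = 0 ∨ (v : ℕ) = a)))

/-- Add `b` dominating vertices to a graph `H` on `m` vertices: the first `b`
vertices are adjacent to everything else (and each other), the remaining `m`
vertices induce a copy of `H`. -/
def withDominating {m : ℕ} (H : SimpleGraph (Fin m)) (b : ℕ) :
    SimpleGraph (Fin (b + m)) :=
  SimpleGraph.fromRel (fun u v =>
    (u : ℕ) < b ∨ (v : ℕ) < b ∨
      ∃ (hu : b ≤ (u : ℕ)) (hv : b ≤ (v : ℕ)),
        H.Adj ⟨(u : ℕ) - b, by have := u.isLt; omega⟩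
          ⟨(v : ℕ) - b, by have := v.isLt; omega⟩)

/-- `F` is a minimal graph with `gn_s ≥ a`: its guessing number with `s` colors
is at least `a`, but every proper subgraph has guessing number `< a`. -/
def MinimalGN {V : Type*} [Finite V] (F : SimpleGraph V) (s : ℕ) (a : ℝ) : Prop :=
  a ≤ guessingNumber F s ∧
    ∀ H : F.Subgraph, H ≠ ⊤ → guessingNumber H.coe s < a

open Finset

namespace SimpleGraph

variable {V : Type*} {H : SimpleGraph V}

theorem card_edgeFinset_add_card_edgeFinset_compl [Fintype V] [DecidableEq V] (G : SimpleGraph V)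
    [DecidableRel G.Adj] :
    #G.edgeFinset + #Gᶜ.edgeFinset = (Fintype.card V).choose 2 := by
  rw [← card_union_of_disjoint (disjoint_edgeFinset.2 disjoint_compl_right), ← edgeFinset_sup,
    ← card_edgeFinset_top_eq_card_choose_two]
  congr! 2
  exact sup_compl_eq_top

-- Merging two colour classes spanning no edge would save a colour.
theorem Coloring.exists_adj_of_not_colorable {c : ℕ} (C : H.Coloring (Fin c))
    (hC : ¬ H.Colorable (c - 1)) {i j : Fin c} (hij : i ≠ j) :
    ∃ u w, H.Adj u w ∧ C u = i ∧ C w = j := by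
  by_contra! hno
  let merge : Fin c → {x // x ≠ j} := fun x => if hx : x = j then ⟨i, hij⟩ else ⟨x, hx⟩
  refine hC ?_
  have hcard : Fintype.card {x : Fin c // x ≠ j} = c - 1 := by
    simp [Fintype.card_subtype_compl]
  rw [← hcard]
  refine (Coloring.mk (merge ∘ C) fun {u w} huw heq => ?_).colorable
  simp only [Function.comp_apply, merge] at heq
  split_ifs at heq with hu hw hw <;> simp only [Subtype.mk.injEq] at heq
  · exact C.valid huw (hu.trans hw.symm)
  · exact hno w u huw.symm heq.symm hu
  · exact hno u w huw heq hw
  · exact C.valid huw heq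

theorem choose_two_le_card_edgeFinset_of_not_colorable [Fintype V] [DecidableRel H.Adj] {t : ℕ}
    (h : ¬ H.Colorable t) :
    (t + 1).choose 2 ≤ #H.edgeFinset := by
  classical
  have hex : ∃ c, H.Colorable c := ⟨_, H.colorable_of_fintype⟩
  set c := Nat.find hex
  obtain ⟨C⟩ := Nat.find_spec hex
  have htc : t < c := by
    by_contra! hct
    exact h ((Nat.find_spec hex).mono hct)
  have hmin : ¬ H.Colorable (c - 1) := Nat.find_min hex (by omega)
  have hsurj : ({z | ¬ z.IsDiag} : Finset (Sym2 (Fin c))) ⊆ H.edgeFinset.image (Sym2.map C) := by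
    intro z
    induction z using Sym2.ind with
    | _ i j =>
      intro hz
      obtain ⟨u, w, huw, rfl, rfl⟩ := C.exists_adj_of_not_colorable hmin (by simpa using hz)
      exact mem_image.2 ⟨s(u, w), mem_edgeFinset.2 huw, rfl⟩
  calc (t + 1).choose 2 ≤ c.choose 2 := Nat.choose_le_choose 2 htc
    _ = #({z | ¬ z.IsDiag} : Finset (Sym2 (Fin c))) := by
      rw [← Fintype.card_subtype, Sym2.card_subtype_not_diag, Fintype.card_fin]
    _ ≤ #(H.edgeFinset.image (Sym2.map C)) := card_le_card hsurj
    _ ≤ #H.edgeFinset := card_image_le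

theorem Colorable.of_deleteIncidenceSet [Fintype V] [DecidableEq V] [DecidableRel H.Adj] {t : ℕ}
    {v : V} (h : (H.deleteIncidenceSet v).Colorable t) (hv : H.degree v < t) : H.Colorable t := by
  obtain ⟨C⟩ := h
  obtain ⟨c₀, -, hc₀⟩ := exists_mem_notMem_of_card_lt_card
    (s := (H.neighborFinset v).image C) (t := univ) <| by
      simpa using card_image_le.trans_lt ((H.card_neighborFinset_eq_degree v).trans_lt hv)
  have hfree : ∀ w, H.Adj v w → C w ≠ c₀ := fun w hw hwc =>
    hc₀ (mem_image.2 ⟨w, (H.mem_neighborFinset v w).2 hw, hwc⟩)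
  refine ⟨Coloring.mk (Function.update C v c₀) fun {u w} huw => ?_⟩
  rcases eq_or_ne u v with rfl | hu
  · rw [Function.update_self, Function.update_of_ne huw.ne']
    exact (hfree w huw).symm
  rcases eq_or_ne w v with rfl | hw
  · rw [Function.update_self, Function.update_of_ne hu]
    exact hfree u huw.symm
  rw [Function.update_of_ne hu, Function.update_of_ne hw]
  exact C.valid (deleteIncidenceSet_adj.2 ⟨huw, hu, hw⟩)

theorem degree_eq_zero_or_le_of_not_colorable [Fintype V] [DecidableEq V] [DecidableRel H.Adj]
    {t : ℕ} (h : ¬ H.Colorable t) (he : #H.edgeFinset ≤ (t + 1).choose 2) (v : V) :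
    H.degree v = 0 ∨ t ≤ H.degree v := by
  by_contra! hv
  refine h (Colorable.of_deleteIncidenceSet (by_contra fun h' => ?_) hv.2)
  have := choose_two_le_card_edgeFinset_of_not_colorable h'
  rw [card_edgeFinset_deleteIncidenceSet] at this
  have : 0 < (t + 1).choose 2 := Nat.choose_pos (by omega)
  omega

theorem exists_finset_adj_iff_of_not_colorable [Fintype V] [DecidableEq V] [DecidableRel H.Adj]
    {t : ℕ} (ht : 0 < t) (h : ¬ H.Colorable t) (he : #H.edgeFinset = (t + 1).choose 2) :
    ∃ S : Finset V, #S = t + 1 ∧ ∀ u w, H.Adj u w ↔ u ∈ S ∧ w ∈ S ∧ u ≠ w := by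
  set S : Finset V := {v | 0 < H.degree v}
  have hmem : ∀ {u w}, H.Adj u w → u ∈ S := fun huw =>
    mem_filter.2 ⟨mem_univ _, H.degree_pos_iff_exists_adj _ |>.2 ⟨_, huw⟩⟩
  have hdeg : ∀ v ∈ S, t ≤ H.degree v := fun v hv =>
    (degree_eq_zero_or_le_of_not_colorable h he.le v).resolve_left (mem_filter.1 hv).2.ne'
  have hnbr : ∀ v, H.neighborFinset v ⊆ S.erase v := fun v w hw =>
    have hvw := (H.mem_neighborFinset v w).1 hw
    mem_erase.2 ⟨hvw.ne', hmem hvw.symm⟩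
  have hS_le : #S ≤ t + 1 := by
    have hsum : #S * t ≤ (t + 1) * t := by
      calc #S * t ≤ ∑ v ∈ S, H.degree v := by
            rw [← smul_eq_mul, ← sum_const]; exact sum_le_sum hdeg
        _ = ∑ v, H.degree v := sum_subset (subset_univ S) fun v _ hv => by simpa [S] using hv
        _ = (t + 1) * t := by
            rw [sum_degrees_eq_twice_card_edges, he, Nat.choose_two_right, Nat.add_sub_cancel,
              Nat.two_mul_div_two_of_even (by simpa using Nat.even_mul_pred_self (t + 1))]
    exact Nat.le_of_mul_le_mul_right hsum ht
  obtain ⟨v, hv⟩ : S.Nonempty := by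
    obtain ⟨e, he⟩ := card_pos.1 (he ▸ Nat.choose_pos (by omega) : 0 < #H.edgeFinset)
    induction e using Sym2.ind with
    | _ u w => exact ⟨u, hmem (mem_edgeFinset.1 he)⟩
  have hS : #S = t + 1 := by
    have := (hdeg v hv).trans ((H.card_neighborFinset_eq_degree v).symm.le.trans
      (card_le_card (hnbr v)))
    rw [card_erase_of_mem hv] at this
    omega
  have hnbr_eq : ∀ v ∈ S, H.neighborFinset v = S.erase v := fun v hv =>
    eq_of_subset_of_card_le (hnbr v) <| by
      rw [card_erase_of_mem hv, hS, Nat.add_sub_cancel, card_neighborFinset_eq_degree]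
      exact hdeg v hv
  refine ⟨S, hS, fun u w => ⟨fun huw => ⟨hmem huw, hmem huw.symm, huw.ne⟩, ?_⟩⟩
  rintro ⟨hu, hw, huw⟩
  rw [← mem_neighborFinset, hnbr_eq u hu]
  exact mem_erase.2 ⟨huw.symm, hw⟩

end SimpleGraph

section GuessingGame

variable {V ι : Type*} {G : SimpleGraph V} {s : ℕ}

theorem IsGuessingStrategy.card_fixedPoints_le_maxFixedPoints [Finite V]
    {f : V → (V → Fin s) → Fin s} (hf : IsGuessingStrategy G s f) :
    Nat.card {c : V → Fin s // ∀ v, f v c = c v} ≤ maxFixedPoints G s :=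
  le_csSup ⟨Nat.card (V → Fin s), by rintro _ ⟨g, -, rfl⟩; exact Finite.card_subtype_le _⟩
    ⟨f, hf, rfl⟩

section FiberSum

variable [Fintype V] [DecidableEq ι] [NeZero s]

def fiberSum (φ : V → ι) : (V → Fin s) →+ (ι → Fin s) where
  toFun c i := ∑ u with φ u = i, c u
  map_zero' := by ext; simp
  map_add' c d := by ext; simp [sum_add_distrib]

/-- Every vertex guesses that the colours on its fibre of `φ` sum to zero. -/
def fiberStrategy [DecidableEq V] (φ : V → ι) : V → (V → Fin s) → Fin s :=
  fun v c => -∑ u ∈ ({u | φ u = φ v} : Finset V).erase v, c u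

theorem isGuessingStrategy_fiberStrategy [DecidableEq V] (C : Gᶜ.Coloring ι) :
    IsGuessingStrategy G s (fiberStrategy C) := by
  intro v c₁ c₂ hc
  refine congrArg Neg.neg (sum_congr rfl fun u hu => hc u ?_)
  obtain ⟨huv, hu⟩ := mem_erase.1 hu
  by_contra hvu
  exact C.valid ((G.compl_adj v u).2 ⟨huv.symm, hvu⟩) (mem_filter.1 hu).2.symm

theorem fiberStrategy_apply_eq_of_fiberSum_eq_zero [DecidableEq V] {φ : V → ι} {c : V → Fin s}
    (hc : fiberSum φ c = 0) (v : V) : fiberStrategy φ v c = c v := by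
  have hv := congrFun hc (φ v)
  rw [fiberSum, AddMonoidHom.coe_mk, ZeroHom.coe_mk, Pi.zero_apply,
    ← add_sum_erase _ _ (by simp : v ∈ ({u | φ u = φ v} : Finset V))] at hv
  exact (eq_neg_of_add_eq_zero_left hv).symm

end FiberSum

/-- A colouring of `Gᶜ` with `t` colours partitions `V` into `t` cliques of `G`; the kernel of
`fiberSum` has index at most `s ^ t` and consists of fixed points of `fiberStrategy`. -/
theorem le_guessingNumber_of_colorable_compl [Fintype V] (hs : 1 < s) {t : ℕ}
    (h : Gᶜ.Colorable t) :
    (Fintype.card V : ℝ) - t ≤ guessingNumber G s := by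
  classical
  have : NeZero s := ⟨by omega⟩
  obtain ⟨C⟩ := h
  set K := (fiberSum (s := s) C).ker
  have hK : s ^ Fintype.card V ≤ Nat.card K * s ^ t := by
    calc s ^ Fintype.card V = Nat.card K * Nat.card (fiberSum (s := s) C).range := by
          rw [← AddSubgroup.index_ker, AddSubgroup.card_mul_index]; simp
      _ ≤ Nat.card K * s ^ t := by
          gcongr
          exact (Nat.card_le_card_of_injective _ Subtype.coe_injective).trans_eq (by simp)
  have hfix : Nat.card K ≤ maxFixedPoints G s :=
    (Nat.card_le_card_of_injective
      (fun c : K => (⟨c.1, fiberStrategy_apply_eq_of_fiberSum_eq_zero c.2⟩ :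
        {c : V → Fin s // ∀ v, fiberStrategy C v c = c v}))
      fun _ _ h => Subtype.ext (Subtype.mk.inj h)).trans
    (isGuessingStrategy_fiberStrategy C).card_fixedPoints_le_maxFixedPoints
  have hs' : (1 : ℝ) < s := by exact_mod_cast hs
  have hpos : (0 : ℝ) < maxFixedPoints G s := by
    exact_mod_cast Nat.card_pos.trans_le hfix
  have key : (s : ℝ) ^ Fintype.card V ≤ maxFixedPoints G s * s ^ t := by
    exact_mod_cast hK.trans (Nat.mul_le_mul_right _ hfix)
  calc (Fintype.card V : ℝ) - t = Real.logb s ((s : ℝ) ^ Fintype.card V) - t := by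
        rw [Real.logb_pow, Real.logb_self_eq_one hs', mul_one]
    _ ≤ Real.logb s (maxFixedPoints G s * s ^ t) - t := by
        gcongr
    _ = guessingNumber G s := by
        rw [Real.logb_mul hpos.ne' (by positivity), Real.logb_pow, Real.logb_self_eq_one hs',
          guessingNumber]
        ring

end GuessingGame

theorem nonempty_iso_cliqueJoinEmpty {n k : ℕ} (hkn : k ≤ n) {G : SimpleGraph (Fin n)}
    {S : Finset (Fin n)} (hS : #S = n - k)
    (hG : ∀ u w, Gᶜ.Adj u w ↔ u ∈ S ∧ w ∈ S ∧ u ≠ w) :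
    Nonempty (G ≃g cliqueJoinEmpty n k) := by
  have hcard : Fintype.card {v // v ∉ S} = Fintype.card {v : Fin n // (v : ℕ) < k} := by
    rw [Fintype.card_subtype_compl, Fintype.card_coe, hS, Fintype.card_subtype,
      Fin.card_filter_val_lt, Fintype.card_fin]
    omega
  set e := Fintype.equivOfCardEq hcard
  have hext : ∀ v, (e.extendSubtype v : ℕ) < k ↔ v ∉ S := fun v => by
    by_cases hv : v ∈ S
    · simpa [hv] using e.extendSubtype_not_mem v (not_not.2 hv)
    · simpa [hv] using e.extendSubtype_mem v hv
  refine ⟨⟨e.extendSubtype, fun {u w} => ?_⟩⟩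
  have hGc := hG u w
  rw [compl_adj] at hGc
  have hne : G.Adj u w → u ≠ w := G.ne_of_adj
  simp only [cliqueJoinEmpty, fromRel_adj, ne_eq, e.extendSubtype.injective.eq_iff, hext]
  tauto

theorem extremal_graph_unique_general (s : ℕ) (hs : 2 ≤ s) (a : ℝ) (k n : ℕ)
    (hk : (k : ℤ) = ⌈a⌉ - 1) (hn : ⌈a⌉ < (n : ℤ)) (G : SimpleGraph (Fin n))
    (hG : guessingNumber G s < a)
    (hE : Nat.card G.edgeSet = n.choose 2 - (n - k).choose 2) :
    Nonempty (G ≃g cliqueJoinEmpty n k) := by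
  classical
  have hkn : k + 2 ≤ n := by omega
  have hak : a ≤ k + 1 := by
    have hceil : (⌈a⌉ : ℝ) = k + 1 := by exact_mod_cast (by omega : ⌈a⌉ = k + 1)
    exact hceil ▸ Int.le_ceil a
  have hcol : ¬ Gᶜ.Colorable (n - k - 1) := fun h => by
    have := le_guessingNumber_of_colorable_compl (s := s) (by omega) h
    rw [Fintype.card_fin, Nat.cast_sub (by omega), Nat.cast_sub (by omega), Nat.cast_one] at this
    linarith
  have hcard : #Gᶜ.edgeFinset = (n - k - 1 + 1).choose 2 := by
    have := G.card_edgeFinset_add_card_edgeFinset_compl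
    rw [edgeFinset_card, ← Nat.card_eq_fintype_card, hE, Fintype.card_fin] at this
    have := Nat.choose_le_choose 2 (Nat.sub_le n k)
    rw [Nat.sub_add_cancel (by omega)]
    omega
  obtain ⟨S, hS, hSadj⟩ := Gᶜ.exists_finset_adj_iff_of_not_colorable (by omega) hcol hcard
  exact nonempty_iso_cliqueJoinEmpty (by omega) (by omega) hSadj

/-- For `s ≥ 2`, `a > 0`, `k = ⌈a⌉ - 1` and `n > ⌈a⌉`, any graph on `n` vertices
with guessing number `< a` and exactly `C(n,2) - C(n-k,2)` edges is isomorphic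
to `K_k ⊕ E_{n-k}`. -/
theorem extremal_graph_unique (s : ℕ) (hs : 2 ≤ s) (a : ℝ) (ha : 0 < a) (k n : ℕ)
    (hk : (k : ℤ) = ⌈a⌉ - 1) (hn : ⌈a⌉ < (n : ℤ)) (G : SimpleGraph (Fin n))
    (hG : guessingNumber G s < a)
    (hE : Nat.card G.edgeSet = n.choose 2 - (n - k).choose 2) :
    Nonempty (G ≃g cliqueJoinEmpty n k) :=
  extremal_graph_unique_general s hs a k n hk hn G hG hE
end

section
/- For every graph G, every vertex v of G, and every integer s ≥ 2, the guessing number satisfies gn(G − v, s) ≤ gn(G, s) ≤ gn(G − v, s) + 1, where G − v is the graph obtained from G by deleting the vertex v and all edges incident to it. -/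
/-!
A strategy on `G - v` becomes a strategy on `G` with the same fixed points once `v` is told to
guess a constant color, so deleting `v` cannot increase the maximum number of fixed points.
Conversely, fixing the color `i` of `v` turns a strategy on `G` into one on `G - v`, whose fixed
points contain the restrictions of the fixed points of the original strategy with `c v = i`;
summing over the `s` choices of `i` gives `maxFixedPoints G s ≤ s * maxFixedPoints (G - v) s`.
Taking `logb s` gives the two inequalities.
-/

open SimpleGraph

section MaxFixedPoints

variable {V : Type*} {G : SimpleGraph V} {s : ℕ}

abbrev StrategyFixedPoints (f : V → (V → Fin s) → Fin s) : Type _ :=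
  {c : V → Fin s // ∀ v, f v c = c v}

theorem card_strategyFixedPoints_le_maxFixedPoints [Finite V] {f : V → (V → Fin s) → Fin s}
    (hf : IsGuessingStrategy G s f) : Nat.card (StrategyFixedPoints f) ≤ maxFixedPoints G s := by
  refine le_csSup ⟨Nat.card (V → Fin s), ?_⟩ ⟨f, hf, rfl⟩
  rintro n ⟨g, -, rfl⟩
  exact Nat.card_le_card_of_injective _ Subtype.val_injective

theorem maxFixedPoints_le {m : ℕ}
    (h : ∀ f, IsGuessingStrategy G s f → Nat.card (StrategyFixedPoints f) ≤ m) :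
    maxFixedPoints G s ≤ m :=
  csSup_le' <| by
    rintro n ⟨f, hf, rfl⟩
    exact h f hf

theorem maxFixedPoints_pos [Finite V] [NeZero s] : 0 < maxFixedPoints G s := by
  have hconst : IsGuessingStrategy G s fun _ _ => 0 := fun _ _ _ _ => rfl
  have : Nonempty (StrategyFixedPoints fun (_ : V) (_ : V → Fin s) => (0 : Fin s)) :=
    ⟨⟨fun _ => 0, fun _ => rfl⟩⟩
  exact Nat.card_pos.trans_le (card_strategyFixedPoints_le_maxFixedPoints hconst)

theorem maxFixedPoints_comap_subtype_le [Finite V] [NeZero s] (p : V → Prop) :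
    maxFixedPoints (G.comap (Subtype.val : {u // p u} → V)) s ≤ maxFixedPoints G s := by
  classical
  refine maxFixedPoints_le fun f' hf' => ?_
  let f : V → (V → Fin s) → Fin s := fun u c =>
    if h : p u then f' ⟨u, h⟩ (c ∘ Subtype.val) else 0
  have hf : IsGuessingStrategy G s f := by
    intro u c₁ c₂ h
    by_cases hu : p u
    · simp only [f, dif_pos hu]
      exact hf' _ _ _ fun w hw => h w hw
    · simp only [f, dif_neg hu]
  -- Colorings of `{u // p u}` extend to `V` by the color `0`, the guess of every other vertex.
  let extend (d : {u // p u} → Fin s) : V → Fin s := Function.extend Subtype.val d 0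
  have extend_comp (d : {u // p u} → Fin s) : extend d ∘ Subtype.val = d :=
    Function.extend_comp Subtype.val_injective d 0
  have extend_fixed (d : StrategyFixedPoints f') : ∀ u, f u (extend d.1) = extend d.1 u := by
    intro u
    by_cases hu : p u
    · simp only [f, dif_pos hu, extend_comp]
      rw [d.2 ⟨u, hu⟩]
      exact (Subtype.val_injective.extend_apply d.1 0 ⟨u, hu⟩).symm
    · simp only [f, dif_neg hu]
      refine (Function.extend_apply' (f := Subtype.val) d.1 0 u ?_).symm
      rintro ⟨a, rfl⟩
      exact hu a.2
  refine le_trans ?_ (card_strategyFixedPoints_le_maxFixedPoints hf)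
  refine Nat.card_le_card_of_injective (fun d => ⟨extend d.1, extend_fixed d⟩) ?_
  intro d₁ d₂ h
  apply Subtype.ext
  rw [← extend_comp d₁.1, ← extend_comp d₂.1]
  exact congrArg (· ∘ Subtype.val) (congrArg Subtype.val h)

theorem maxFixedPoints_le_mul_deleteVertex [Finite V] (v : V) :
    maxFixedPoints G s ≤ s * maxFixedPoints (G.comap (Subtype.val : {u // u ≠ v} → V)) s := by
  classical
  set G' := G.comap (Subtype.val : {u // u ≠ v} → V)
  refine maxFixedPoints_le fun f hf => ?_
  let split := Equiv.funSplitAt v (Fin s)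
  let fixColor (i : Fin s) : {u // u ≠ v} → ({u // u ≠ v} → Fin s) → Fin s :=
    fun u d => f u (split.symm (i, d))
  have hfixColor (i : Fin s) : IsGuessingStrategy G' s (fixColor i) := by
    intro u d₁ d₂ h
    refine hf u _ _ fun w hw => ?_
    by_cases hwv : w = v
    · simp [split, hwv]
    · simpa [split, hwv] using h ⟨w, hwv⟩ hw
  have hsplit (c : StrategyFixedPoints f) (u : {u // u ≠ v}) :
      fixColor (c.1 v) u (c.1 ∘ Subtype.val) = c.1 u := by
    have : split.symm (c.1 v, c.1 ∘ Subtype.val) = c.1 := split.symm_apply_apply c.1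
    simp only [fixColor, this, c.2]
  let restrict (c : StrategyFixedPoints f) : Σ i, StrategyFixedPoints (fixColor i) :=
    ⟨c.1 v, c.1 ∘ Subtype.val, hsplit c⟩
  have hrestrict : Function.Injective restrict :=
    Function.Injective.of_comp (f := fun x : Σ i, StrategyFixedPoints (fixColor i) => (x.1, x.2.1))
      (split.injective.comp Subtype.val_injective :)
  calc Nat.card (StrategyFixedPoints f)
      ≤ Nat.card (Σ i, StrategyFixedPoints (fixColor i)) :=
        Nat.card_le_card_of_injective _ hrestrict
    _ = ∑ i, Nat.card (StrategyFixedPoints (fixColor i)) := Nat.card_sigma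
    _ ≤ ∑ _i : Fin s, maxFixedPoints G' s :=
        Finset.sum_le_sum fun i _ => card_strategyFixedPoints_le_maxFixedPoints (hfixColor i)
    _ = s * maxFixedPoints G' s := by simp

end MaxFixedPoints

/-- Deleting a vertex decreases the guessing number by at most 1:
`gn(G - v, s) ≤ gn(G, s) ≤ gn(G - v, s) + 1`. -/
theorem guessingNumber_deleteVertex (V : Type*) [Finite V] (G : SimpleGraph V)
    (v : V) (s : ℕ) (hs : 2 ≤ s) :
    guessingNumber (G.comap (Subtype.val : {u : V // u ≠ v} → V)) s
        ≤ guessingNumber G s ∧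
      guessingNumber G s
        ≤ guessingNumber (G.comap (Subtype.val : {u : V // u ≠ v} → V)) s + 1 := by
  set G' := G.comap (Subtype.val : {u : V // u ≠ v} → V)
  have : NeZero s := ⟨by omega⟩
  have hs' : (1 : ℝ) < s := by exact_mod_cast hs
  have hG'_pos : (0 : ℝ) < maxFixedPoints G' s := by exact_mod_cast maxFixedPoints_pos
  have hG_pos : (0 : ℝ) < maxFixedPoints G s := by exact_mod_cast maxFixedPoints_pos
  refine ⟨Real.logb_le_logb_of_le hs' hG'_pos ?_, ?_⟩
  · exact_mod_cast maxFixedPoints_comap_subtype_le _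
  · have hle : (maxFixedPoints G s : ℝ) ≤ s * maxFixedPoints G' s := by
      exact_mod_cast maxFixedPoints_le_mul_deleteVertex v
    calc guessingNumber G s
        ≤ Real.logb s (s * maxFixedPoints G' s) := Real.logb_le_logb_of_le hs' hG_pos hle
      _ = guessingNumber G' s + 1 := by
        rw [Real.logb_mul (by positivity) hG'_pos.ne', Real.logb_self_eq_one hs', add_comm]
        rfl
end
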